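/- Let ψ : ℝⁿ → ℝ be L-Lipschitz with respect to the parabolic metric d((x,s),(y,t)) = |x−y| + |s−t|^{1/2}. Then for every parabolic box Q (a box I₁ × I₂ with I₁ ⊂ ℝ^{n−1} a cube and |I₂| = ℓ(I₁)²), the restricted L∞ beta number satisfies β_∞^L(Q) ≤ C(L,n) · (β_2^L(2Q))^{2/(n+3)}, where β_p^L(Q) is defined via approximation by L-Lipschitz affine maps A : ℝ^{n−1} → ℝ of the form (x,t) ↦ A(x). -/

import Mathlib

open MeasureTheory
open scoped NNReal

/-- The parabolic distance on `ℝ^{n-1} × ℝ`. -/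
noncomputable def pdist {d : ℕ} (p q : EuclideanSpace ℝ (Fin d) × ℝ) : ℝ :=
  dist p.1 q.1 + Real.sqrt |p.2 - q.2|

/-- Diameter of a set in the parabolic metric. -/
noncomputable def pdiam {d : ℕ} (S : Set (EuclideanSpace ℝ (Fin d) × ℝ)) : ℝ :=
  sSup ((fun pq : (EuclideanSpace ℝ (Fin d) × ℝ) × (EuclideanSpace ℝ (Fin d) × ℝ) =>
    pdist pq.1 pq.2) '' (S ×ˢ S))

/-- The `c`-dilate of a parabolic box with spatial centre `z`, time centre `t₀` and
spatial side length `ℓ` (hence time side length `ℓ²`). -/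
def pBox (d : ℕ) (z : EuclideanSpace ℝ (Fin d)) (t₀ ℓ c : ℝ) :
    Set (EuclideanSpace ℝ (Fin d) × ℝ) :=
  {p | (∀ i, |p.1 i - z i| ≤ c * ℓ / 2) ∧ |p.2 - t₀| ≤ c * ℓ ^ 2 / 2}

/-- The `L`-restricted `L²` beta number of a parabolic box: the infimum over `L`-Lipschitz
affine maps `A : ℝ^{n-1} → ℝ` of the normalised `L²` distance of `ψ` to `(x,t) ↦ A x`. -/
noncomputable def betaTwoL (d : ℕ) (L : ℝ≥0) (ψ : EuclideanSpace ℝ (Fin d) × ℝ → ℝ)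
    (Q : Set (EuclideanSpace ℝ (Fin d) × ℝ)) : ℝ :=
  sInf {r : ℝ | ∃ A : EuclideanSpace ℝ (Fin d) →ᵃ[ℝ] ℝ, LipschitzWith L A ∧
    r = Real.sqrt ((pdiam Q ^ (d + 2))⁻¹ * ∫ p in Q, (|ψ p - A p.1| / pdiam Q) ^ 2)}

/-- The `L`-restricted `L^∞` beta number of a parabolic box. -/
noncomputable def betaInfL (d : ℕ) (L : ℝ≥0) (ψ : EuclideanSpace ℝ (Fin d) × ℝ → ℝ)
    (Q : Set (EuclideanSpace ℝ (Fin d) × ℝ)) : ℝ :=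
  sInf {r : ℝ | ∃ A : EuclideanSpace ℝ (Fin d) →ᵃ[ℝ] ℝ, LipschitzWith L A ∧
    r = ⨆ p ∈ Q, |ψ p - A p.1| / pdiam Q}

/-!
If an admissible affine `A` misses `ψ` by `ε` at a point `p` of `Q`, then, both being
`L`-Lipschitz for the parabolic metric, `|ψ - A| ≥ ε / 2` on the whole parabolic box of side
`≍ ε / (L + 1)` around `p`. That box has volume `≍ ε^(d+2)`, so `ε^(d+4) ≲ ∫_{2Q} |ψ - A|²`,
which after normalisation is `β_∞ ≲ β₂^(2/(d+4))`. If the box is too large to fit in `2Q`, the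
integral is already `≳ ℓ^(d+4)`, i.e. `β₂(2Q) ≳ 1`, and the trivial bound `β_∞(Q) ≤ L`
(approximate `ψ` by a constant) suffices.
-/

open MeasureTheory Set
open scoped NNReal

section ParabolicBox

variable {d : ℕ}

lemma pdist_nonneg (p q : EuclideanSpace ℝ (Fin d) × ℝ) : 0 ≤ pdist p q :=
  add_nonneg dist_nonneg (Real.sqrt_nonneg _)

lemma pdiam_nonneg (S : Set (EuclideanSpace ℝ (Fin d) × ℝ)) : 0 ≤ pdiam S :=
  Real.sSup_nonneg <| by rintro _ ⟨pq, -, rfl⟩; exact pdist_nonneg _ _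

lemma dist_le_sqrt_mul_of_abs_sub_le {x y : EuclideanSpace ℝ (Fin d)} {u : ℝ}
    (hu : 0 ≤ u) (h : ∀ i, |x i - y i| ≤ u) : dist x y ≤ Real.sqrt d * u := by
  rw [EuclideanSpace.dist_eq, ← Real.sqrt_sq hu, ← Real.sqrt_mul (Nat.cast_nonneg d)]
  refine Real.sqrt_le_sqrt ?_
  calc ∑ i, dist (x i) (y i) ^ 2 ≤ ∑ _i : Fin d, u ^ 2 :=
        Finset.sum_le_sum fun i _ => pow_le_pow_left₀ dist_nonneg (h i) 2
    _ = d * u ^ 2 := by simp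

variable {z : EuclideanSpace ℝ (Fin d)} {t₀ ℓ c : ℝ}

lemma pdist_le_of_mem_pBox (hc : 0 ≤ c) (hℓ : 0 ≤ ℓ) {p q : EuclideanSpace ℝ (Fin d) × ℝ}
    (hp : p ∈ pBox d z t₀ ℓ c) (hq : q ∈ pBox d z t₀ ℓ c) :
    pdist p q ≤ (Real.sqrt d * c + Real.sqrt c) * ℓ := by
  have hspace : dist p.1 q.1 ≤ Real.sqrt d * (c * ℓ) := by
    refine dist_le_sqrt_mul_of_abs_sub_le (by positivity) fun i => ?_
    linarith [abs_sub_le (p.1 i) (z i) (q.1 i), abs_sub_comm (q.1 i) (z i), hp.1 i, hq.1 i]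
  have htime : |p.2 - q.2| ≤ c * ℓ ^ 2 := by
    linarith [abs_sub_le p.2 t₀ q.2, abs_sub_comm q.2 t₀, hp.2, hq.2]
  have hsqrt : Real.sqrt |p.2 - q.2| ≤ Real.sqrt c * ℓ := by
    rw [← Real.sqrt_sq hℓ, ← Real.sqrt_mul hc]
    exact Real.sqrt_le_sqrt htime
  unfold pdist
  linarith

lemma bddAbove_pdist_pBox (hc : 0 ≤ c) (hℓ : 0 ≤ ℓ) :
    BddAbove ((fun pq : (EuclideanSpace ℝ (Fin d) × ℝ) × (EuclideanSpace ℝ (Fin d) × ℝ) =>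
      pdist pq.1 pq.2) '' (pBox d z t₀ ℓ c ×ˢ pBox d z t₀ ℓ c)) :=
  ⟨_, by rintro _ ⟨⟨p, q⟩, ⟨hp, hq⟩, rfl⟩; exact pdist_le_of_mem_pBox hc hℓ hp hq⟩

lemma pdist_le_pdiam_pBox (hc : 0 ≤ c) (hℓ : 0 ≤ ℓ) {p q : EuclideanSpace ℝ (Fin d) × ℝ}
    (hp : p ∈ pBox d z t₀ ℓ c) (hq : q ∈ pBox d z t₀ ℓ c) : pdist p q ≤ pdiam (pBox d z t₀ ℓ c) :=
  le_csSup (bddAbove_pdist_pBox hc hℓ) ⟨(p, q), ⟨hp, hq⟩, rfl⟩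

lemma pdiam_pBox_le (hc : 0 ≤ c) (hℓ : 0 ≤ ℓ) :
    pdiam (pBox d z t₀ ℓ c) ≤ (Real.sqrt d * c + Real.sqrt c) * ℓ :=
  Real.sSup_le (by rintro _ ⟨⟨p, q⟩, ⟨hp, hq⟩, rfl⟩; exact pdist_le_of_mem_pBox hc hℓ hp hq)
    (by positivity)

lemma mem_pBox_of_fst_eq {p : EuclideanSpace ℝ (Fin d) × ℝ} (hc : 0 ≤ c) (hℓ : 0 ≤ ℓ)
    (h1 : p.1 = z) (h2 : |p.2 - t₀| ≤ c * ℓ ^ 2 / 2) : p ∈ pBox d z t₀ ℓ c :=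
  ⟨fun i => by simp only [h1, sub_self, abs_zero]; positivity, h2⟩

lemma sqrt_mul_le_pdiam_pBox (hc : 0 ≤ c) (hℓ : 0 ≤ ℓ) :
    Real.sqrt c * ℓ ≤ pdiam (pBox d z t₀ ℓ c) := by
  have hh : 0 ≤ c * ℓ ^ 2 / 2 := by positivity
  have hbot : (z, t₀ - c * ℓ ^ 2 / 2) ∈ pBox d z t₀ ℓ c :=
    mem_pBox_of_fst_eq hc hℓ rfl (by simp [abs_of_nonneg hh])
  have htop : (z, t₀ + c * ℓ ^ 2 / 2) ∈ pBox d z t₀ ℓ c :=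
    mem_pBox_of_fst_eq hc hℓ rfl (by simp [abs_of_nonneg hh])
  have hgap : |t₀ - c * ℓ ^ 2 / 2 - (t₀ + c * ℓ ^ 2 / 2)| = c * ℓ ^ 2 := by
    rw [show t₀ - c * ℓ ^ 2 / 2 - (t₀ + c * ℓ ^ 2 / 2) = -(c * ℓ ^ 2) by ring, abs_neg,
      abs_of_nonneg (by positivity)]
  convert pdist_le_pdiam_pBox hc hℓ hbot htop using 1
  rw [pdist, dist_self, zero_add, hgap, Real.sqrt_mul hc, Real.sqrt_sq hℓ]

lemma pdiam_pBox_pos (hc : 0 < c) (hℓ : 0 < ℓ) : 0 < pdiam (pBox d z t₀ ℓ c) :=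
  (by positivity : 0 < Real.sqrt c * ℓ).trans_le (sqrt_mul_le_pdiam_pBox hc.le hℓ.le)

lemma pdiam_pBox_two_le (hℓ : 0 ≤ ℓ) :
    pdiam (pBox d z t₀ ℓ 2) ≤ 2 * (Real.sqrt d + 1) * ℓ := by
  have hsqrt2 : Real.sqrt 2 ≤ 2 := Real.sqrt_le_iff.2 ⟨zero_le_two, by norm_num⟩
  exact (pdiam_pBox_le zero_le_two hℓ).trans (by nlinarith)

lemma pBox_eq_prod (d : ℕ) (z : EuclideanSpace ℝ (Fin d)) (t₀ ℓ c : ℝ) :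
    pBox d z t₀ ℓ c =
      (WithLp.ofLp ⁻¹' univ.pi fun i => Icc (z i - c * ℓ / 2) (z i + c * ℓ / 2)) ×ˢ
        Icc (t₀ - c * ℓ ^ 2 / 2) (t₀ + c * ℓ ^ 2 / 2) := by
  ext p
  simp only [pBox, mem_ofPred_eq, mem_prod, mem_preimage, mem_univ_pi, mem_Icc, abs_le]
  refine and_congr (forall_congr' fun i => ?_) ?_ <;>
    exact ⟨fun h => ⟨by linarith [h.1], by linarith [h.2]⟩,
      fun h => ⟨by linarith [h.1], by linarith [h.2]⟩⟩

lemma isCompact_pBox (d : ℕ) (z : EuclideanSpace ℝ (Fin d)) (t₀ ℓ c : ℝ) :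
    IsCompact (pBox d z t₀ ℓ c) := by
  rw [pBox_eq_prod]
  exact ((PiLp.continuousLinearEquiv 2 ℝ _).toHomeomorph.isCompact_preimage.2
    (isCompact_univ_pi fun _ => isCompact_Icc)).prod isCompact_Icc

lemma volume_pBox (d : ℕ) (z : EuclideanSpace ℝ (Fin d)) (t₀ ℓ c : ℝ) :
    volume (pBox d z t₀ ℓ c) = ENNReal.ofReal (c * ℓ) ^ d * ENNReal.ofReal (c * ℓ ^ 2) := by
  rw [pBox_eq_prod, Measure.volume_eq_prod, Measure.prod_prod,
    (PiLp.volume_preserving_ofLp (Fin d)).measure_preimage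
      (MeasurableSet.univ_pi fun _ => measurableSet_Icc).nullMeasurableSet]
  simp only [volume_pi_pi, Real.volume_Icc, add_sub_sub_cancel, add_halves, Finset.prod_const,
    Finset.card_univ, Fintype.card_fin]

lemma pBox_subset_pBox_two {p : EuclideanSpace ℝ (Fin d) × ℝ} (hp : p ∈ pBox d z t₀ ℓ 1)
    {u : ℝ} (hu : 0 ≤ u) (huℓ : u ≤ ℓ / 2) : pBox d p.1 p.2 (2 * u) 1 ⊆ pBox d z t₀ ℓ 2 := by
  rintro q ⟨hq1, hq2⟩
  refine ⟨fun i => ?_, ?_⟩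
  · linarith [abs_sub_le (q.1 i) (p.1 i) (z i), hq1 i, hp.1 i]
  · nlinarith [abs_sub_le q.2 p.2 t₀, hp.2]

end ParabolicBox

section LipschitzGraph

variable {d : ℕ} {L : ℝ≥0} {ψ : EuclideanSpace ℝ (Fin d) × ℝ → ℝ}
  {A : EuclideanSpace ℝ (Fin d) →ᵃ[ℝ] ℝ}

lemma continuous_of_abs_sub_le_mul_pdist {K : ℝ} (hψ : ∀ p q, |ψ p - ψ q| ≤ K * pdist p q) :
    Continuous ψ := by
  refine continuous_iff_continuousAt.2 fun q => tendsto_iff_dist_tendsto_zero.2 ?_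
  have hcont : Continuous fun p => K * pdist p q := by unfold pdist; fun_prop
  exact squeeze_zero (fun _ => dist_nonneg) (fun p => hψ p q)
    (by simpa [pdist] using hcont.tendsto q)

lemma abs_sub_affine_sub_le (hψ : ∀ p q, |ψ p - ψ q| ≤ (L : ℝ) * pdist p q)
    (hA : LipschitzWith L A) (p q : EuclideanSpace ℝ (Fin d) × ℝ) :
    |(ψ p - A p.1) - (ψ q - A q.1)| ≤ 2 * L * pdist p q := by
  have hA' : |A p.1 - A q.1| ≤ L * pdist p q :=
    (hA.dist_le_mul _ _).trans <|
      mul_le_mul_of_nonneg_left (le_add_of_nonneg_right (Real.sqrt_nonneg _)) L.coe_nonneg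
  calc |(ψ p - A p.1) - (ψ q - A q.1)| ≤ |ψ p - ψ q| + |A p.1 - A q.1| := by
        rw [sub_sub_sub_comm]; exact abs_sub _ _
    _ ≤ 2 * L * pdist p q := by linarith [hψ p q]

lemma sq_mul_pow_le_integral_sq (hψ : ∀ p q, |ψ p - ψ q| ≤ (L : ℝ) * pdist p q)
    (hA : LipschitzWith L A) {z : EuclideanSpace ℝ (Fin d)} {t₀ ℓ u : ℝ}
    {p : EuclideanSpace ℝ (Fin d) × ℝ} (hp : p ∈ pBox d z t₀ ℓ 1) (hu : 0 ≤ u)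
    (huℓ : u ≤ ℓ / 2) {ε : ℝ} (hεu : 8 * L * (Real.sqrt d + 1) * u ≤ ε)
    (hεp : ε ≤ |ψ p - A p.1|) :
    (ε / 2) ^ 2 * (2 * u) ^ (d + 2) ≤
      ∫ q in pBox d z t₀ ℓ 2, (ψ q - A q.1) ^ 2 := by
  have hε₀ : 0 ≤ ε := le_trans (by positivity) hεu
  set R := pBox d p.1 p.2 (2 * u) 1
  have hsub : R ⊆ pBox d z t₀ ℓ 2 := pBox_subset_pBox_two hp hu huℓ
  have hpR : p ∈ R := mem_pBox_of_fst_eq zero_le_one (by positivity) rfl (by simp; positivity)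
  have hlow : ∀ q ∈ R, (ε / 2) ^ 2 ≤ (ψ q - A q.1) ^ 2 := by
    intro q hq
    have hpq : pdist p q ≤ (Real.sqrt d + 1) * (2 * u) := by
      simpa using pdist_le_of_mem_pBox zero_le_one (by positivity) hpR hq
    have hLpq : 2 * L * pdist p q ≤ 2 * L * ((Real.sqrt d + 1) * (2 * u)) :=
      mul_le_mul_of_nonneg_left hpq (by positivity)
    rw [← sq_abs (ψ q - _)]
    refine pow_le_pow_left₀ (by positivity) ?_ 2
    linarith [abs_sub_abs_le_abs_sub (ψ p - A p.1) (ψ q - A q.1),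
      abs_sub_affine_sub_le hψ hA p q]
  have hvol : volume.real R = (2 * u) ^ (d + 2) := by
    rw [measureReal_def, volume_pBox, ENNReal.toReal_mul, ENNReal.toReal_pow,
      ENNReal.toReal_ofReal (by positivity), ENNReal.toReal_ofReal (by positivity)]
    ring
  have hint : IntegrableOn (fun q => (ψ q - A q.1) ^ 2) (pBox d z t₀ ℓ 2) :=
    (((continuous_of_abs_sub_le_mul_pdist hψ).sub (A.continuous_of_finiteDimensional.comp
      continuous_fst)).pow 2).continuousOn.integrableOn_compact (isCompact_pBox d z t₀ ℓ 2)
  calc (ε / 2) ^ 2 * (2 * u) ^ (d + 2)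
      = (ε / 2) ^ 2 * volume.real R := by rw [hvol]
    _ ≤ ∫ q in R, (ψ q - A q.1) ^ 2 :=
      setIntegral_ge_of_const_le_real (isCompact_pBox _ _ _ _ _).isClosed.measurableSet
        (isCompact_pBox _ _ _ _ _).measure_lt_top.ne hlow (hint.mono_set hsub)
    _ ≤ ∫ q in pBox d z t₀ ℓ 2, (ψ q - A q.1) ^ 2 :=
      setIntegral_mono_set hint (ae_of_all _ fun _ => sq_nonneg _) hsub.eventuallyLE

end LipschitzGraph

/-- A deviation `ε` at `p` is captured on the box of side `2 * (ε / scaleRatio d L)` around `p`: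
the factor `8 * L * (√d + 1)` is what `sq_mul_pow_le_integral_sq` needs, and `L + 1` keeps the
ratio `≥ 4` also when `L = 0`. -/
noncomputable def scaleRatio (d : ℕ) (L : ℝ≥0) : ℝ := 8 * (L + 1) * (Real.sqrt d + 1)

lemma scaleRatio_pos (d : ℕ) (L : ℝ≥0) : 0 < scaleRatio d L := by
  unfold scaleRatio; positivity

lemma pow_le_or_pow_le_integral_sq {d : ℕ} {L : ℝ≥0} {ψ : EuclideanSpace ℝ (Fin d) × ℝ → ℝ}
    {A : EuclideanSpace ℝ (Fin d) →ᵃ[ℝ] ℝ} (hψ : ∀ p q, |ψ p - ψ q| ≤ (L : ℝ) * pdist p q)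
    (hA : LipschitzWith L A) {z : EuclideanSpace ℝ (Fin d)} {t₀ ℓ : ℝ} (hℓ : 0 ≤ ℓ)
    {p : EuclideanSpace ℝ (Fin d) × ℝ} (hp : p ∈ pBox d z t₀ ℓ 1) :
    |ψ p - A p.1| ^ (d + 4) ≤
        scaleRatio d L ^ (d + 4) * ∫ q in pBox d z t₀ ℓ 2, (ψ q - A q.1) ^ 2 ∨
      ℓ ^ (d + 4) ≤ ∫ q in pBox d z t₀ ℓ 2, (ψ q - A q.1) ^ 2 := by
  have hL := L.coe_nonneg
  have hsqrt := Real.sqrt_nonneg d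
  have hκ_ge : 8 * L * (Real.sqrt d + 1) ≤ scaleRatio d L := by unfold scaleRatio; nlinarith
  have hκ_ge_four : 4 ≤ scaleRatio d L := by unfold scaleRatio; nlinarith
  generalize scaleRatio d L = κ at *
  generalize hε : |ψ p - A p.1| = ε
  have hκ : 0 < κ := by linarith
  rcases le_or_gt ε (κ * ℓ / 2) with hsmall | hlarge
  · left
    have hε₀ : 0 ≤ ε := hε ▸ abs_nonneg _
    have hmass := sq_mul_pow_le_integral_sq (u := ε / κ) hψ hA hp (by positivity)
      (by rw [div_le_iff₀ hκ]; linarith)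
      (by rw [← mul_div_assoc, div_le_iff₀ hκ, mul_comm ε]; gcongr)
      hε.ge
    have hscale : (ε / 2) ^ 2 * (2 * (ε / κ)) ^ (d + 2) = 2 ^ d * ε ^ (d + 4) / κ ^ (d + 2) := by
      rw [mul_div_assoc', div_pow, div_pow, mul_pow, div_mul_div_comm, pow_add 2 d 2]
      ring
    rw [hscale, div_le_iff₀ (by positivity)] at hmass
    have hE : 0 ≤ ∫ q in pBox d z t₀ ℓ 2, (ψ q - A q.1) ^ 2 :=
      nonneg_of_mul_nonneg_left (le_trans (by positivity) hmass) (by positivity)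
    calc ε ^ (d + 4) ≤ 2 ^ d * ε ^ (d + 4) :=
          le_mul_of_one_le_left (by positivity) (one_le_pow₀ (by norm_num))
      _ ≤ (∫ q in pBox d z t₀ ℓ 2, (ψ q - A q.1) ^ 2) * κ ^ (d + 2) := hmass
      _ ≤ κ ^ (d + 4) * ∫ q in pBox d z t₀ ℓ 2, (ψ q - A q.1) ^ 2 := by
          rw [mul_comm]; gcongr; exacts [by linarith, by omega]
  · right
    have hmass := sq_mul_pow_le_integral_sq (u := ℓ / 2) hψ hA hp (by positivity) le_rfl
      (by nlinarith) hε.ge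
    have hℓε : ℓ ≤ ε / 2 := by nlinarith
    calc ℓ ^ (d + 4) = ℓ ^ 2 * (2 * (ℓ / 2)) ^ (d + 2) := by ring
      _ ≤ (ε / 2) ^ 2 * (2 * (ℓ / 2)) ^ (d + 2) := by gcongr
      _ ≤ _ := hmass

lemma le_mul_csInf_rpow {S : Set ℝ} (hS : S.Nonempty) (hS₀ : ∀ r ∈ S, 0 ≤ r) {b C e : ℝ}
    (hC : 0 < C) (he : 0 < e) (h : ∀ r ∈ S, b ≤ C * r ^ e) : b ≤ C * sInf S ^ e := by
  rw [← div_le_iff₀' hC]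
  rcases le_or_gt (b / C) 0 with hb | hb
  · exact hb.trans (Real.rpow_nonneg (Real.sInf_nonneg hS₀) e)
  have hroot : (b / C) ^ e⁻¹ ≤ sInf S := le_csInf hS fun r hr =>
    (Real.rpow_inv_le_iff_of_pos hb.le (hS₀ r hr) he).2 ((div_le_iff₀' hC).2 (h r hr))
  exact (Real.rpow_inv_le_iff_of_pos hb.le (Real.sInf_nonneg hS₀) he).1 hroot

lemma sqrt_inv_pow_mul_div_sq_rpow {D E : ℝ} (hD : 0 < D) (hE : 0 ≤ E) (d : ℕ) :
    Real.sqrt ((D ^ (d + 2))⁻¹ * (E / D ^ 2)) ^ ((2 : ℝ) / (d + 4)) = E ^ ((d : ℝ) + 4)⁻¹ / D := by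
  have hN : ((d + 4 : ℕ) : ℝ) = d + 4 := by push_cast; ring
  rw [Real.sqrt_eq_rpow, ← Real.rpow_mul (by positivity),
    show (D ^ (d + 2))⁻¹ * (E / D ^ 2) = E / D ^ (d + 4) by field_simp; ring,
    show 1 / 2 * (2 / ((d : ℝ) + 4)) = ((d + 4 : ℕ) : ℝ)⁻¹ by rw [hN]; field_simp,
    Real.div_rpow hE (by positivity), Real.pow_rpow_inv_natCast hD.le (by omega), hN]

section BetaNumbers

variable {d : ℕ} {L : ℝ≥0} {ψ : EuclideanSpace ℝ (Fin d) × ℝ → ℝ}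

lemma betaInfL_le_of_forall_abs_le {Q : Set (EuclideanSpace ℝ (Fin d) × ℝ)}
    {A : EuclideanSpace ℝ (Fin d) →ᵃ[ℝ] ℝ} (hA : LipschitzWith L A) {b : ℝ} (hb : 0 ≤ b)
    (h : ∀ p ∈ Q, |ψ p - A p.1| ≤ b * pdiam Q) : betaInfL d L ψ Q ≤ b := by
  have hbdd : BddBelow {r : ℝ | ∃ A : EuclideanSpace ℝ (Fin d) →ᵃ[ℝ] ℝ, LipschitzWith L A ∧
      r = ⨆ p ∈ Q, |ψ p - A p.1| / pdiam Q} := ⟨0, by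
    rintro _ ⟨A, -, rfl⟩
    exact Real.iSup_nonneg fun p => Real.iSup_nonneg fun _ =>
      div_nonneg (abs_nonneg _) (pdiam_nonneg Q)⟩
  refine (csInf_le hbdd ⟨A, hA, rfl⟩).trans <| Real.iSup_le (fun p => Real.iSup_le
    (fun hp => div_le_of_le_mul₀ (pdiam_nonneg Q) hb (h p hp)) hb) hb

lemma betaInfL_pBox_le (hψ : ∀ p q, |ψ p - ψ q| ≤ (L : ℝ) * pdist p q)
    {z : EuclideanSpace ℝ (Fin d)} {t₀ ℓ c : ℝ} (hc : 0 ≤ c) (hℓ : 0 ≤ ℓ) :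
    betaInfL d L ψ (pBox d z t₀ ℓ c) ≤ L := by
  have hcenter : (z, t₀) ∈ pBox d z t₀ ℓ c :=
    mem_pBox_of_fst_eq hc hℓ rfl (by simp only [sub_self, abs_zero]; positivity)
  refine betaInfL_le_of_forall_abs_le (A := AffineMap.const ℝ _ (ψ (z, t₀)))
    (LipschitzWith.const' _) L.coe_nonneg fun p hp => ?_
  exact (hψ p (z, t₀)).trans
    (mul_le_mul_of_nonneg_left (pdist_le_pdiam_pBox hc hℓ hp hcenter) L.coe_nonneg)

lemma betaInfL_pBox_le_mul_rpow (hψ : ∀ p q, |ψ p - ψ q| ≤ (L : ℝ) * pdist p q)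
    {A : EuclideanSpace ℝ (Fin d) →ᵃ[ℝ] ℝ} (hA : LipschitzWith L A)
    {z : EuclideanSpace ℝ (Fin d)} {t₀ ℓ : ℝ} (hℓ : 0 < ℓ) :
    betaInfL d L ψ (pBox d z t₀ ℓ 1) ≤ (scaleRatio d L + L) *
      (∫ q in pBox d z t₀ ℓ 2, (ψ q - A q.1) ^ 2) ^ ((d : ℝ) + 4)⁻¹ / ℓ := by
  have hdich := fun p (hp : p ∈ pBox d z t₀ ℓ 1) => pow_le_or_pow_le_integral_sq hψ hA hℓ.le hp
  have hE : 0 ≤ ∫ q in pBox d z t₀ ℓ 2, (ψ q - A q.1) ^ 2 := integral_nonneg fun _ => sq_nonneg _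
  generalize ∫ q in pBox d z t₀ ℓ 2, (ψ q - A q.1) ^ 2 = E at hdich hE ⊢
  have hτ : (E ^ ((d : ℝ) + 4)⁻¹) ^ (d + 4) = E := by
    simpa using Real.rpow_inv_natCast_pow (n := d + 4) hE (by omega)
  have hτ₀ : 0 ≤ E ^ ((d : ℝ) + 4)⁻¹ := by positivity
  generalize E ^ ((d : ℝ) + 4)⁻¹ = τ at hτ hτ₀ ⊢
  have hκL := (scaleRatio_pos d L).le
  by_cases hbig : ℓ ^ (d + 4) ≤ E
  · have hℓτ : ℓ ≤ τ := (pow_le_pow_iff_left₀ hℓ.le hτ₀ (by omega)).1 (hτ ▸ hbig)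
    calc betaInfL d L ψ (pBox d z t₀ ℓ 1) ≤ L := betaInfL_pBox_le hψ zero_le_one hℓ.le
      _ ≤ L * τ / ℓ := by rw [le_div_iff₀ hℓ]; exact mul_le_mul_of_nonneg_left hℓτ L.coe_nonneg
      _ ≤ (scaleRatio d L + L) * τ / ℓ := by gcongr; linarith
  · refine betaInfL_le_of_forall_abs_le hA (by positivity) fun p hp => ?_
    have hdev : |ψ p - A p.1| ≤ scaleRatio d L * τ := by
      have h := (hdich p hp).resolve_right hbig
      rwa [← hτ, ← mul_pow, pow_le_pow_iff_left₀ (abs_nonneg _) (by positivity) (by omega)] at h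
    have hℓD : ℓ ≤ pdiam (pBox d z t₀ ℓ 1) := by
      simpa using sqrt_mul_le_pdiam_pBox (z := z) (t₀ := t₀) zero_le_one hℓ.le
    calc |ψ p - A p.1| ≤ (scaleRatio d L + L) * τ :=
          hdev.trans (by gcongr; linarith [L.coe_nonneg])
      _ = (scaleRatio d L + L) * τ / ℓ * ℓ := by field_simp
      _ ≤ _ := by gcongr

lemma betaInfL_pBox_le_mul_rpow_div_pdiam (hψ : ∀ p q, |ψ p - ψ q| ≤ (L : ℝ) * pdist p q)
    {A : EuclideanSpace ℝ (Fin d) →ᵃ[ℝ] ℝ} (hA : LipschitzWith L A)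
    {z : EuclideanSpace ℝ (Fin d)} {t₀ ℓ : ℝ} (hℓ : 0 < ℓ) :
    betaInfL d L ψ (pBox d z t₀ ℓ 1) ≤ 2 * (Real.sqrt d + 1) * (scaleRatio d L + L) *
      (∫ q in pBox d z t₀ ℓ 2, (ψ q - A q.1) ^ 2) ^ ((d : ℝ) + 4)⁻¹ /
        pdiam (pBox d z t₀ ℓ 2) := by
  have hD : 0 < pdiam (pBox d z t₀ ℓ 2) := pdiam_pBox_pos zero_lt_two hℓ
  refine (betaInfL_pBox_le_mul_rpow hψ hA hℓ).trans ?_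
  have hτ : 0 ≤ (∫ q in pBox d z t₀ ℓ 2, (ψ q - A q.1) ^ 2) ^ ((d : ℝ) + 4)⁻¹ := by positivity
  generalize (∫ q in pBox d z t₀ ℓ 2, (ψ q - A q.1) ^ 2) ^ ((d : ℝ) + 4)⁻¹ = τ at hτ ⊢
  have hκL := (scaleRatio_pos d L).le
  rw [div_le_div_iff₀ hℓ hD]
  calc (scaleRatio d L + L) * τ * pdiam (pBox d z t₀ ℓ 2)
      ≤ (scaleRatio d L + L) * τ * (2 * (Real.sqrt d + 1) * ℓ) := by
        gcongr; exact pdiam_pBox_two_le hℓ.le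
    _ = _ := by ring

end BetaNumbers

-- The ambient dimension is `n = d + 1`, so the paper's exponent `2/(n+3)` is `2/(d+4)`.
/-- If `ψ` is `L`-Lipschitz for the parabolic metric, then on every parabolic box `Q`
one has `β_∞^L(Q) ≤ C(L,n) (β_2^L(2Q))^{2/(n+3)}`, where the ambient dimension is
`n = d + 1`, so `n + 3 = d + 4`. -/
theorem stmt6 (d : ℕ) (L : ℝ≥0) :
    ∃ C : ℝ, 0 < C ∧
      ∀ ψ : EuclideanSpace ℝ (Fin d) × ℝ → ℝ,
        (∀ p q, |ψ p - ψ q| ≤ (L : ℝ) * pdist p q) →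
      ∀ (z : EuclideanSpace ℝ (Fin d)) (t₀ ℓ : ℝ), 0 < ℓ →
        betaInfL d L ψ (pBox d z t₀ ℓ 1) ≤
          C * betaTwoL d L ψ (pBox d z t₀ ℓ 2) ^ ((2 : ℝ) / (d + 4)) := by
  have hC : 0 < 2 * (Real.sqrt d + 1) * (scaleRatio d L + L) := by
    have := scaleRatio_pos d L; positivity
  refine ⟨_, hC, fun ψ hψ z t₀ ℓ hℓ => ?_⟩
  unfold betaTwoL
  have hD : 0 < pdiam (pBox d z t₀ ℓ 2) := pdiam_pBox_pos zero_lt_two hℓ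
  refine le_mul_csInf_rpow ?_ ?_ hC (by positivity) ?_
  · exact ⟨_, AffineMap.const ℝ _ 0, LipschitzWith.const' _, rfl⟩
  · rintro _ ⟨A, -, rfl⟩
    positivity
  rintro _ ⟨A, hA, rfl⟩
  simp_rw [div_pow, sq_abs]
  rw [integral_div, sqrt_inv_pow_mul_div_sq_rpow hD (integral_nonneg fun _ => sq_nonneg _),
    ← mul_div_assoc]
  exact betaInfL_pBox_le_mul_rpow_div_pdiam hψ hA hℓ
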